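/- Let ℤ²₀ = ℤ² \ {0}, ℤ²₊ = {k ∈ ℤ²₀ : k₁ > 0, or k₁ = 0 and k₂ > 0}, ℤ²₋ = −ℤ²₊. For k ∈ ℤ²₀ and x ∈ ℝ², set e_k(x) = √2·cos(2π k·x) if k ∈ ℤ²₊ and e_k(x) = √2·sin(2π k·x) if k ∈ ℤ²₋, and set σ_k(x) = (k⊥/|k|)·e_k(x), where k⊥ = (k₂, −k₁) and |k| is the Euclidean norm. Let θ : ℤ²₀ → ℝ satisfy ∑_{k∈ℤ²₀} θ_k² = 1 and θ_k = θ_l whenever |k| = |l|. Then for every x ∈ ℝ², the family of 2×2 matrices (θ_k² · σ_k(x) σ_k(x)ᵀ)_{k∈ℤ²₀} is summable and ∑_{k∈ℤ²₀} θ_k² · σ_k(x) σ_k(x)ᵀ = (1/2)·I₂, where I₂ is the 2×2 identity matrix and σ_k(x) σ_k(x)ᵀ denotes the outer product. -/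

import Mathlib

/-- Euclidean norm of a lattice point `k ∈ ℤ²`. -/
noncomputable def latNorm (k : ℤ × ℤ) : ℝ := Real.sqrt ((k.1 : ℝ) ^ 2 + (k.2 : ℝ) ^ 2)

/-- The eigenfunctions `e_k` of the Laplacian on the 2D torus, viewed as 1-periodic
functions on `ℝ²`: `e_k(x) = √2 cos(2π k·x)` for `k ∈ ℤ²₊` and `√2 sin(2π k·x)` for
`k ∈ ℤ²₋`, where `ℤ²₊ = {k : k₁ > 0, or k₁ = 0 and k₂ > 0}`. -/
noncomputable def ek (k : ℤ × ℤ) (x : ℝ × ℝ) : ℝ :=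
  if 0 < k.1 ∨ (k.1 = 0 ∧ 0 < k.2)
  then Real.sqrt 2 * Real.cos (2 * Real.pi * ((k.1 : ℝ) * x.1 + (k.2 : ℝ) * x.2))
  else Real.sqrt 2 * Real.sin (2 * Real.pi * ((k.1 : ℝ) * x.1 + (k.2 : ℝ) * x.2))

/-- The divergence-free vector fields `σ_k(x) = (k⊥/|k|) e_k(x)`, `k⊥ = (k₂, −k₁)`. -/
noncomputable def sigmaVF (k : ℤ × ℤ) (x : ℝ × ℝ) : Fin 2 → ℝ :=
  fun i => (![(k.2 : ℝ), -(k.1 : ℝ)] i / latNorm k) * ek k x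

/-!
Pairing `k` with `-k`: exactly one of them lies in `ℤ²₊`, so `e_k² + e_{-k}² = 2 (cos² + sin²) = 2`
and the sum equals `∑ 2 θ_k² P_k`, with `P_k` the orthogonal projection onto `ℝ k⊥`. Pairing `k`
with its rotation `k⊥`, which has the same norm and hence the same `θ`, gives `P_k + P_{k⊥} = I`.
So four times the sum is `2 ∑ θ_k² I = 2 I`.
-/

open Matrix

theorem HasSum.add_comp_equiv {α M : Type*} [AddCommMonoid M] [TopologicalSpace M] [ContinuousAdd M]
    {f g : α → M} {S : M} (e : α ≃ α) (hf : HasSum f S) (h : ∀ k, f k + f (e k) = g k) :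
    HasSum g (S + S) :=
  funext h ▸ hf.add (e.hasSum_iff.2 hf)

theorem Matrix.summable_smul_of_abs_le {ι m n : Type*} {w : ι → ℝ} {M : ι → Matrix m n ℝ} {C : ℝ}
    (hw : Summable w) (hw0 : ∀ k, 0 ≤ w k) (hM : ∀ k i j, |M k i j| ≤ C) :
    Summable fun k => w k • M k :=
  Pi.summable.2 fun i => Pi.summable.2 fun j =>
    (hw.mul_right C).of_norm_bounded fun k => by
      simpa [abs_mul, abs_of_nonneg (hw0 k)] using mul_le_mul_of_nonneg_left (hM k i j) (hw0 k)

/-- Rotation `k ↦ k⊥` of `ℤ²`; note `(k⊥)⊥ = -k`. -/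
def latRot : ℤ × ℤ ≃+ ℤ × ℤ where
  toFun k := (k.2, -k.1)
  invFun k := (-k.2, k.1)
  left_inv k := by simp
  right_inv k := by simp
  map_add' k l := by ext <;> simp [add_comm]

lemma latNorm_sq (k : ℤ × ℤ) : latNorm k ^ 2 = (k.1 : ℝ) ^ 2 + (k.2 : ℝ) ^ 2 :=
  Real.sq_sqrt (by positivity)

lemma latNorm_pos {k : ℤ × ℤ} (hk : k ≠ 0) : 0 < latNorm k := by
  have : (k.1 : ℝ) ≠ 0 ∨ (k.2 : ℝ) ≠ 0 := by
    rw [Ne, Prod.ext_iff, not_and_or] at hk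
    simpa using hk
  refine Real.sqrt_pos.2 ?_
  rcases this with h | h <;> positivity

lemma latNorm_neg (k : ℤ × ℤ) : latNorm (-k) = latNorm k := by
  simp [latNorm]

lemma latNorm_latRot (k : ℤ × ℤ) : latNorm (latRot k) = latNorm k := by
  simp [latNorm, latRot, add_comm]

lemma ek_sq_le (k : ℤ × ℤ) (x : ℝ × ℝ) : ek k x ^ 2 ≤ 2 := by
  unfold ek
  split <;> rw [mul_pow, Real.sq_sqrt zero_le_two]
  · nlinarith [Real.cos_sq_le_one (2 * Real.pi * ((k.1 : ℝ) * x.1 + (k.2 : ℝ) * x.2))]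
  · nlinarith [Real.sin_sq_le_one (2 * Real.pi * ((k.1 : ℝ) * x.1 + (k.2 : ℝ) * x.2))]

/-- Exactly one of `k`, `-k` lies in `ℤ²₊`, so `e_k² + e_{-k}² = 2 (cos² + sin²)`. -/
lemma ek_sq_add_ek_neg_sq {k : ℤ × ℤ} (hk : k ≠ 0) (x : ℝ × ℝ) :
    ek k x ^ 2 + ek (-k) x ^ 2 = 2 := by
  obtain ⟨a, b⟩ := k
  have hab : a ≠ 0 ∨ b ≠ 0 := by
    rw [Ne, Prod.ext_iff, not_and_or] at hk
    exact hk
  simp only [ek, Prod.fst_neg, Prod.snd_neg]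
  set φ := 2 * Real.pi * ((a : ℝ) * x.1 + (b : ℝ) * x.2)
  have hφ : 2 * Real.pi * (((-a : ℤ) : ℝ) * x.1 + ((-b : ℤ) : ℝ) * x.2) = -φ := by
    push_cast; ring
  have hsqrt : Real.sqrt 2 ^ 2 = 2 := Real.sq_sqrt zero_le_two
  rw [hφ, Real.cos_neg, Real.sin_neg]
  split_ifs <;> first | omega |
    linear_combination (Real.cos φ ^ 2 + Real.sin φ ^ 2) * hsqrt + 2 * Real.sin_sq_add_cos_sq φ

noncomputable def perpVec (k : ℤ × ℤ) : Fin 2 → ℝ := ![(k.2 : ℝ), -(k.1 : ℝ)]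

/-- The orthogonal projection onto `ℝ k⊥` (zero for `k = 0`). -/
noncomputable def perpProj (k : ℤ × ℤ) : Matrix (Fin 2) (Fin 2) ℝ :=
  (latNorm k ^ 2)⁻¹ • vecMulVec (perpVec k) (perpVec k)

lemma perpProj_neg (k : ℤ × ℤ) : perpProj (-k) = perpProj k := by
  have : perpVec (-k) = -perpVec k := by
    ext i; fin_cases i <;> simp [perpVec]
  rw [perpProj, perpProj, latNorm_neg, this, neg_vecMulVec, vecMulVec_neg, neg_neg]

lemma abs_perpProj_le (k : ℤ × ℤ) (i j : Fin 2) : |perpProj k i j| ≤ 1 := by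
  have hprod : |perpVec k i * perpVec k j| ≤ latNorm k ^ 2 := by
    rw [latNorm_sq, abs_le]
    fin_cases i <;> fin_cases j <;> simp [perpVec] <;> constructor <;>
      nlinarith [sq_nonneg ((k.1 : ℝ) + k.2), sq_nonneg ((k.1 : ℝ) - k.2)]
  rw [perpProj, Matrix.smul_apply, vecMulVec_apply, smul_eq_mul, ← div_eq_inv_mul, abs_div,
    abs_of_nonneg (sq_nonneg (latNorm k))]
  exact div_le_one_of_le₀ hprod (sq_nonneg _)

/-- `k⊥ k⊥ᵀ + k kᵀ = |k|² I`, and `(latRot k)⊥ = -k`. -/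
lemma perpProj_add_perpProj_latRot {k : ℤ × ℤ} (hk : k ≠ 0) :
    perpProj k + perpProj (latRot k) = 1 := by
  have hn : (k.1 : ℝ) ^ 2 + (k.2 : ℝ) ^ 2 ≠ 0 := by
    rw [← latNorm_sq]
    exact (pow_pos (latNorm_pos hk) 2).ne'
  rw [perpProj, perpProj, latNorm_latRot, latNorm_sq]
  ext i j
  fin_cases i <;> fin_cases j <;> simp [perpVec, latRot] <;> field_simp <;> ring

lemma sigmaVF_eq_smul_perpVec (k : ℤ × ℤ) (x : ℝ × ℝ) :
    sigmaVF k x = (ek k x / latNorm k) • perpVec k := by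
  ext i
  simp only [sigmaVF, perpVec, Pi.smul_apply, smul_eq_mul]
  ring

lemma vecMulVec_sigmaVF (k : ℤ × ℤ) (x : ℝ × ℝ) :
    vecMulVec (sigmaVF k x) (sigmaVF k x) = ek k x ^ 2 • perpProj k := by
  rw [sigmaVF_eq_smul_perpVec, smul_vecMulVec, vecMulVec_smul, smul_smul, perpProj, smul_smul]
  congr 1
  ring

lemma vecMulVec_sigmaVF_add_neg {k : ℤ × ℤ} (hk : k ≠ 0) (x : ℝ × ℝ) :
    vecMulVec (sigmaVF k x) (sigmaVF k x) + vecMulVec (sigmaVF (-k) x) (sigmaVF (-k) x)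
      = (2 : ℝ) • perpProj k := by
  rw [vecMulVec_sigmaVF, vecMulVec_sigmaVF, perpProj_neg, ← add_smul, ek_sq_add_ek_neg_sq hk]

/-- Covariance identity (3.3): if `θ ∈ ℓ²(ℤ²₀)` with `∑ θ_k² = 1` and
`θ_k = θ_l` whenever `|k| = |l|`, then `∑_k θ_k² σ_k(x) σ_k(x)ᵀ = (1/2) I₂` for every `x`. -/
theorem stmt_4 (θ : {k : ℤ × ℤ // k ≠ 0} → ℝ)
    (hθ1 : HasSum (fun k : {k : ℤ × ℤ // k ≠ 0} => θ k ^ 2) 1)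
    (hθ2 : ∀ k l : {k : ℤ × ℤ // k ≠ 0}, latNorm k.1 = latNorm l.1 → θ k = θ l)
    (x : ℝ × ℝ) :
    HasSum (fun k : {k : ℤ × ℤ // k ≠ 0} =>
        θ k ^ 2 • Matrix.vecMulVec (sigmaVF k.1 x) (sigmaVF k.1 x))
      ((1/2 : ℝ) • (1 : Matrix (Fin 2) (Fin 2) ℝ)) := by
  let neg : {k : ℤ × ℤ // k ≠ 0} ≃ {k : ℤ × ℤ // k ≠ 0} :=
    (Equiv.neg _).subtypeEquiv fun _ => neg_ne_zero.symm
  let rot : {k : ℤ × ℤ // k ≠ 0} ≃ {k : ℤ × ℤ // k ≠ 0} :=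
    latRot.toEquiv.subtypeEquiv fun _ => (map_ne_zero_iff latRot latRot.injective).symm
  obtain ⟨S, hS⟩ : Summable fun k : {k : ℤ × ℤ // k ≠ 0} =>
      θ k ^ 2 • vecMulVec (sigmaVF k.1 x) (sigmaVF k.1 x) :=
    summable_smul_of_abs_le (C := 2) hθ1.summable (fun k => sq_nonneg (θ k)) fun k i j => by
      rw [vecMulVec_sigmaVF, Matrix.smul_apply, smul_eq_mul, abs_mul, abs_sq]
      exact (mul_le_mul (ek_sq_le k.1 x) (abs_perpProj_le k.1 i j) (abs_nonneg _)
        zero_le_two).trans_eq (mul_one 2)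
  have hpair : HasSum (fun k => (2 * θ k ^ 2) • perpProj k.1) (S + S) :=
    hS.add_comp_equiv neg fun k => by
      rw [hθ2 (neg k) k (latNorm_neg k.1), ← smul_add, show (neg k : ℤ × ℤ) = -k.1 from rfl,
        vecMulVec_sigmaVF_add_neg k.2, smul_smul, mul_comm]
  have hquad : HasSum (fun k => (2 * θ k ^ 2) • (1 : Matrix (Fin 2) (Fin 2) ℝ))
      (S + S + (S + S)) :=
    hpair.add_comp_equiv rot fun k => by
      rw [hθ2 (rot k) k (latNorm_latRot k.1), ← smul_add]
      exact congrArg _ (perpProj_add_perpProj_latRot k.2)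
  have h4S : S + S + (S + S) = (2 : ℝ) • 1 := by
    simpa using hquad.unique ((hθ1.mul_left 2).smul_const 1)
  have hS_eq : S = (1/2 : ℝ) • 1 := by linear_combination (norm := module) (1/4 : ℝ) • h4S
  rwa [hS_eq] at hS
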